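/- arXiv:2210.03532 — 3 statements merged into one kernel-verified Lean document; each statement's English description precedes it below -/
import Mathlib

section
/- For every n ≥ 1, ann_R(Ext_R^{n−1}(M₁, N)) · ann_R(Ext_R^n(M₂, N)) ⊆ ann_R(Ext_R^n(M₃, N)); in particular, if r ∈ R annihilates Ext_R^{n−1}(M₁, N) and s ∈ R annihilates Ext_R^n(M₂, N), then r·s annihilates Ext_R^n(M₃, N). -/
open CategoryTheory

/-- The `R`-module `Ext_R^n(M, N)`, computed in the category of `R`-modules. -/
noncomputable abbrev extModule (R : Type u) [CommRing R] (M N : Type u)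
    [AddCommGroup M] [Module R M] [AddCommGroup N] [Module R N] (n : ℕ) :
    ModuleCat.{u} R :=
  ((Ext R (ModuleCat.{u} R) n).obj (Opposite.op (ModuleCat.of R M))).obj (ModuleCat.of R N)

/-!
Resolve `M₁` and `M₃` by free modules and `M₂` by their direct sum (the horseshoe
construction, carried out by iterating canonical free covers on kernels). The sequence
`P₁ → P₁ ⊕ P₃ → P₃` is split in each degree, so applying `Hom(-, N)` gives a short exact
sequence of cochain complexes, whose long exact sequence contains the exact segment
`Ext^{n-1}(M₁, N) → Ext^n(M₃, N) → Ext^n(M₂, N)`. In any exact sequence `A → B → C`,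
`ann A · ann C ⊆ ann B`: if `s` kills `C` then `s • b` comes from `A`, and `r` kills it there.
-/

universe u

namespace CategoryTheory.ProjectiveResolution

variable {R : Type*} [Ring R] {K G : ℕ → Type u}
  [∀ n, AddCommGroup (K n)] [∀ n, Module R (K n)]
  [∀ n, AddCommGroup (G n)] [∀ n, Module R (G n)]
  (q : ∀ n, G n →ₗ[R] K n) (j : ∀ n, K (n + 1) →ₗ[R] G n)

noncomputable abbrev splicedComplex (hexact : ∀ n, Function.Exact (j n) (q n)) :
    ChainComplex (ModuleCat.{u} R) ℕ :=
  ChainComplex.of (fun n => ModuleCat.of R (G n)) (fun n => ModuleCat.ofHom (j n ∘ₗ q (n + 1)))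
    fun n => ModuleCat.hom_ext <| LinearMap.ext fun _ =>
      (congrArg (j n) ((hexact (n + 1)).apply_apply_eq_zero _)).trans (map_zero _)

lemma splicedComplex_d (hexact : ∀ n, Function.Exact (j n) (q n)) (n : ℕ) :
    (splicedComplex q j hexact).d (n + 1) n = ModuleCat.ofHom (j n ∘ₗ q (n + 1)) :=
  ChainComplex.of_d (fun n => ModuleCat.of R (G n)) (fun n => ModuleCat.ofHom (j n ∘ₗ q (n + 1))) n

variable {q j}

lemma exact_splicing (hq : ∀ n, Function.Surjective (q n))
    (hj : ∀ n, Function.Injective (j n)) (hexact : ∀ n, Function.Exact (j n) (q n)) (n : ℕ) :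
    Function.Exact (j (n + 1) ∘ₗ q (n + 2)) (j n ∘ₗ q (n + 1)) :=
  ((hj n).comp_exact_iff_exact).2 <| ((hq (n + 2)).comp_exact_iff_exact).2 (hexact (n + 1))

noncomputable def ofSplicing [∀ n, Module.Projective R (G n)]
    (hq : ∀ n, Function.Surjective (q n)) (hj : ∀ n, Function.Injective (j n))
    (hexact : ∀ n, Function.Exact (j n) (q n)) :
    ProjectiveResolution (ModuleCat.of R (K 0)) where
  complex := splicedComplex q j hexact
  projective n := inferInstanceAs (Projective (ModuleCat.of R (G n)))
  π := (ChainComplex.toSingle₀Equiv _ _).symm ⟨ModuleCat.ofHom (q 0), by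
    rw [splicedComplex_d]
    exact ModuleCat.hom_ext (LinearMap.ext fun _ => (hexact 0).apply_apply_eq_zero _)⟩
  quasiIso := ⟨fun n => by
    cases n with
    | zero =>
      rw [ChainComplex.quasiIsoAt₀_iff, ShortComplex.quasiIso_iff_of_zeros' _ rfl rfl rfl]
      refine ⟨(ShortComplex.ShortExact.moduleCat_exact_iff_function_exact _).2 ?_,
        (ModuleCat.epi_iff_surjective _).2 (hq 0)⟩
      change Function.Exact ((splicedComplex q j hexact).d 1 0) (q 0)
      rw [splicedComplex_d]
      exact ((hq 1).comp_exact_iff_exact).2 (hexact 0)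
    | succ n =>
      rw [quasiIsoAt_iff_exactAt' _ _ (ChainComplex.exactAt_succ_single_obj _ _),
        HomologicalComplex.exactAt_iff' _ (n + 2) (n + 1) n (by simp) (by simp),
        ShortComplex.ShortExact.moduleCat_exact_iff_function_exact]
      change Function.Exact ((splicedComplex q j hexact).d (n + 2) (n + 1))
        ((splicedComplex q j hexact).d (n + 1) n)
      rw [splicedComplex_d, splicedComplex_d]
      exact exact_splicing hq hj hexact n⟩

end CategoryTheory.ProjectiveResolution

structure ModuleSES (R : Type u) [Ring R] where
  X₁ : Type u
  X₂ : Type u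
  X₃ : Type u
  [addCommGroup₁ : AddCommGroup X₁]
  [addCommGroup₂ : AddCommGroup X₂]
  [addCommGroup₃ : AddCommGroup X₃]
  [module₁ : Module R X₁]
  [module₂ : Module R X₂]
  [module₃ : Module R X₃]
  f : X₁ →ₗ[R] X₂
  g : X₂ →ₗ[R] X₃
  injective_f : Function.Injective f
  surjective_g : Function.Surjective g
  exact : Function.Exact f g

attribute [instance] ModuleSES.addCommGroup₁ ModuleSES.addCommGroup₂ ModuleSES.addCommGroup₃
  ModuleSES.module₁ ModuleSES.module₂ ModuleSES.module₃

namespace ModuleSES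

open Finsupp

variable {R : Type u} [Ring R] (S : ModuleSES R)

noncomputable def lift : (S.X₃ →₀ R) →ₗ[R] S.X₂ :=
  linearCombination R (Function.surjInv S.surjective_g)

@[simp]
lemma g_lift (y : S.X₃ →₀ R) : S.g (S.lift y) = linearCombination R id y := by
  induction y using Finsupp.induction_linear <;> simp_all [lift, Function.surjInv_eq]

noncomputable def cover : (S.X₁ →₀ R) × (S.X₃ →₀ R) →ₗ[R] S.X₂ :=
  (S.f ∘ₗ linearCombination R id).coprod S.lift

@[simp]
lemma cover_inl (x : S.X₁ →₀ R) : S.cover (x, 0) = S.f (linearCombination R id x) := by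
  simp [cover]

lemma g_cover (z : (S.X₁ →₀ R) × (S.X₃ →₀ R)) :
    S.g (S.cover z) = linearCombination R id z.2 := by
  simp [cover, S.exact.apply_apply_eq_zero]

lemma surjective_cover : Function.Surjective S.cover := by
  intro b
  obtain ⟨y, hy⟩ := linearCombination_id_surjective R S.X₃ (S.g b)
  obtain ⟨a, ha⟩ := (S.exact (b - S.lift y)).1 <| by rw [map_sub, g_lift, hy, sub_self]
  obtain ⟨x, rfl⟩ := linearCombination_id_surjective R S.X₁ a
  exact ⟨(x, y), by simp [cover, ha]⟩

noncomputable def kernels : ModuleSES R where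
  X₁ := LinearMap.ker (linearCombination R (id : S.X₁ → S.X₁))
  X₂ := LinearMap.ker S.cover
  X₃ := LinearMap.ker (linearCombination R (id : S.X₃ → S.X₃))
  f := (LinearMap.inl R _ _).restrict fun x (hx : _ = 0) => by simp [hx]
  g := (LinearMap.snd R _ _).restrict fun z (hz : _ = 0) => by simp [← g_cover, hz]
  injective_f _ _ h := Subtype.ext (congrArg (fun z => z.1.1) h)
  surjective_g := by
    rintro ⟨y, hy : _ = 0⟩
    obtain ⟨a, ha⟩ := (S.exact (S.lift y)).1 <| by rw [g_lift, hy]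
    obtain ⟨x, rfl⟩ := linearCombination_id_surjective R S.X₁ a
    exact ⟨⟨(-x, y), by simp [cover, ha]⟩, rfl⟩
  exact := by
    rintro ⟨⟨x, y⟩, hxy : _ = 0⟩
    constructor
    · intro hy
      obtain rfl : y = 0 := congrArg Subtype.val hy
      have hx : linearCombination R id x = 0 := S.injective_f (by simpa using hxy)
      exact ⟨⟨x, hx⟩, rfl⟩
    · rintro ⟨a, ha⟩
      rw [← ha]
      rfl

noncomputable def iterateKernels : ℕ → ModuleSES R
  | 0 => S
  | n + 1 => (iterateKernels n).kernels

noncomputable def resolution₁ : ProjectiveResolution (ModuleCat.of R S.X₁) :=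
  ProjectiveResolution.ofSplicing (K := fun n => (S.iterateKernels n).X₁)
    (j := fun _ => Submodule.subtype _)
    (fun n => linearCombination_id_surjective R (S.iterateKernels n).X₁)
    (fun _ => Submodule.injective_subtype _) (fun _ => LinearMap.exact_subtype_ker_map _)

noncomputable def resolution₂ : ProjectiveResolution (ModuleCat.of R S.X₂) :=
  ProjectiveResolution.ofSplicing (K := fun n => (S.iterateKernels n).X₂)
    (j := fun _ => Submodule.subtype _)
    (fun n => (S.iterateKernels n).surjective_cover)
    (fun _ => Submodule.injective_subtype _) (fun _ => LinearMap.exact_subtype_ker_map _)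

noncomputable def resolution₃ : ProjectiveResolution (ModuleCat.of R S.X₃) :=
  ProjectiveResolution.ofSplicing (K := fun n => (S.iterateKernels n).X₃)
    (j := fun _ => Submodule.subtype _)
    (fun n => linearCombination_id_surjective R (S.iterateKernels n).X₃)
    (fun _ => Submodule.injective_subtype _) (fun _ => LinearMap.exact_subtype_ker_map _)

noncomputable def inlChainMap : S.resolution₁.complex ⟶ S.resolution₂.complex :=
  ChainComplex.ofHom (fun n => ModuleCat.ofHom
      (LinearMap.inl R ((S.iterateKernels n).X₁ →₀ R) ((S.iterateKernels n).X₃ →₀ R))) fun n => by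
    ext x
    simp only [resolution₁, resolution₂, ProjectiveResolution.ofSplicing, ChainComplex.of_d,
      ModuleCat.hom_comp, ConcreteCategory.hom_ofHom]
    exact congrArg Subtype.val ((S.iterateKernels (n + 1)).cover_inl x)

noncomputable def sndChainMap : S.resolution₂.complex ⟶ S.resolution₃.complex :=
  ChainComplex.ofHom (fun n => ModuleCat.ofHom
      (LinearMap.snd R ((S.iterateKernels n).X₁ →₀ R) ((S.iterateKernels n).X₃ →₀ R))) fun n => by
    ext x
    simp only [resolution₂, resolution₃, ProjectiveResolution.ofSplicing, ChainComplex.of_d,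
      ModuleCat.hom_comp, ConcreteCategory.hom_ofHom]
    exact (congrArg Subtype.val ((S.iterateKernels (n + 1)).g_cover x)).symm

noncomputable def horseshoe : ShortComplex (ChainComplex (ModuleCat.{u} R) ℕ) :=
  ShortComplex.mk S.inlChainMap S.sndChainMap (by ext; rfl)

noncomputable def horseshoeSplitting (n : ℕ) :
    (S.horseshoe.map (HomologicalComplex.eval _ _ n)).Splitting where
  r := ModuleCat.ofHom (LinearMap.fst R _ _)
  s := ModuleCat.ofHom (LinearMap.inr R _ _)
  id := by
    ext x : 2
    exact Prod.fst_add_snd x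

end ModuleSES

section LinearYoneda

variable {R : Type*} [CommRing R] {C : Type*} [Category C] [Abelian C] [Linear R C]
  {α : Type*} [AddRightCancelSemigroup α] [One α]

variable (R) in
/-- Its value at `K` is `K.linearYonedaObj R Y` by definition, which is what
`ProjectiveResolution.isoExt` computes `Ext` with. -/
noncomputable abbrev ChainComplex.linearYonedaFunctor (Y : C) :
    (ChainComplex C α)ᵒᵖ ⥤ CochainComplex (ModuleCat R) α :=
  (((linearYoneda R C).obj Y).rightOp.mapHomologicalComplex _).op ⋙
    HomologicalComplex.unopFunctor _ _

instance (Y : C) : (ChainComplex.linearYonedaFunctor R (α := α) Y).Additive where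
  map_add {_ _ _ _} := by
    ext n ψ
    exact Preadditive.add_comp _ _ _ _ _ _

lemma CategoryTheory.ShortComplex.shortExact_op_map_linearYonedaFunctor
    (S : ShortComplex (ChainComplex C α))
    (s : ∀ n, (S.map (HomologicalComplex.eval C _ n)).Splitting) (Y : C) :
    (S.op.map (ChainComplex.linearYonedaFunctor R Y)).ShortExact :=
  HomologicalComplex.shortExact_of_degreewise_shortExact _ fun n =>
    ((s n).op.map ((linearYoneda R C).obj Y)).shortExact

end LinearYoneda

lemma Module.annihilator_mul_annihilator_le_of_exact {R A B C : Type*} [CommRing R]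
    [AddCommGroup A] [Module R A] [AddCommGroup B] [Module R B] [AddCommGroup C] [Module R C]
    (f : A →ₗ[R] B) (g : B →ₗ[R] C) (hfg : Function.Exact f g) :
    Module.annihilator R A * Module.annihilator R C ≤ Module.annihilator R B := by
  refine Ideal.mul_le.2 fun r hr s hs => Module.mem_annihilator.2 fun b => ?_
  obtain ⟨a, ha⟩ := (hfg (s • b)).1 (by rw [map_smul, Module.mem_annihilator.1 hs])
  rw [mul_smul, ← ha, ← map_smul, Module.mem_annihilator.1 hr, map_zero]

lemma CategoryTheory.ShortComplex.ShortExact.annihilator_homology_mul_le {R : Type*} [CommRing R]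
    {ι : Type*} {c : ComplexShape ι} {S : ShortComplex (HomologicalComplex (ModuleCat.{u} R) c)}
    (hS : S.ShortExact) {i j : ι} (hij : c.Rel i j) :
    Module.annihilator R (S.X₃.homology i) * Module.annihilator R (S.X₂.homology j) ≤
      Module.annihilator R (S.X₁.homology j) :=
  Module.annihilator_mul_annihilator_le_of_exact (hS.δ i j hij).hom
    (HomologicalComplex.homologyMap S.f j).hom
    ((ShortComplex.ShortExact.moduleCat_exact_iff_function_exact _).1 (hS.homology_exact₁ i j hij))

/-- Let `R` be a commutative ring, `0 → M₁ → M₂ → M₃ → 0` a short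
exact sequence of `R`-modules and `N` an `R`-module.  Then for every `n ≥ 1`,
`ann_R(Ext_R^{n-1}(M₁, N)) · ann_R(Ext_R^n(M₂, N)) ⊆ ann_R(Ext_R^n(M₃, N))`. -/
theorem annihilator_ext_right {R : Type u} [CommRing R]
    {M₁ M₂ M₃ N : Type u} [AddCommGroup M₁] [Module R M₁] [AddCommGroup M₂] [Module R M₂]
    [AddCommGroup M₃] [Module R M₃] [AddCommGroup N] [Module R N]
    (f : M₁ →ₗ[R] M₂) (g : M₂ →ₗ[R] M₃)
    (hf : Function.Injective f) (hg : Function.Surjective g) (hfg : Function.Exact f g)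
    (n : ℕ) (hn : 1 ≤ n) :
    Module.annihilator R (extModule R M₁ N (n - 1)) *
        Module.annihilator R (extModule R M₂ N n) ≤
      Module.annihilator R (extModule R M₃ N n) := by
  let S : ModuleSES R := ⟨M₁, M₂, M₃, f, g, hf, hg, hfg⟩
  have hS := S.horseshoe.shortExact_op_map_linearYonedaFunctor (R := R) S.horseshoeSplitting
    (ModuleCat.of R N)
  have hrel : (ComplexShape.up ℕ).Rel (n - 1) n := by simp only [ComplexShape.up_Rel]; omega
  rw [(S.resolution₁.isoExt (n - 1) _).toLinearEquiv.annihilator_eq,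
    (S.resolution₂.isoExt n _).toLinearEquiv.annihilator_eq,
    (S.resolution₃.isoExt n _).toLinearEquiv.annihilator_eq]
  exact hS.annihilator_homology_mul_le hrel
end

section
/- The ideals satisfy M² ⊆ N and L² ⊆ M, but L² ⊄ N (indeed y² ∉ N). In particular, the binary relation on ideals of R given by 'I ≤ J iff I² ⊆ J' is not transitive. -/
/-!
The two inclusions hold in any commutative ring: the products of the generators of `L`
(resp. `M`) are monomials of degree 2 (resp. 4), and each of them is a multiple of a generator
of `M` (resp. `N`). To see `y² ∉ N`, map `R` to `k[t]/(t³)` by `x ↦ 0`, `y ↦ t`; this is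
well defined because `x²y + y⁶ ↦ t⁶ = 0`. All generators of `N` go to `0`, while `y²` goes to
`t² ≠ 0`. As `y ∈ L`, this gives `L² ⊄ N` although `L² ⊆ M` and `M² ⊆ N`.
-/

set_option synthInstance.maxHeartbeats 1000000

noncomputable section

/-- The one-dimensional `D₇` hypersurface singularity `R = k[x,y]/(x²y + y⁶)`. -/
abbrev D7Ring (k : Type u) [Field k] : Type u :=
  MvPolynomial (Fin 2) k ⧸
    Ideal.span {MvPolynomial.X 0 ^ 2 * MvPolynomial.X 1 +
      (MvPolynomial.X 1 : MvPolynomial (Fin 2) k) ^ 6}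

/-- `x`, the image of the first variable in `R`. -/
def d7x (k : Type u) [Field k] : D7Ring k :=
  Ideal.Quotient.mk _ (MvPolynomial.X 0)

/-- `y`, the image of the second variable in `R`. -/
def d7y (k : Type u) [Field k] : D7Ring k :=
  Ideal.Quotient.mk _ (MvPolynomial.X 1)

namespace Ideal

variable {R : Type*} [CommRing R]

theorem span_sq_le_of_mul_mem {S : Set R} {J : Ideal R} (h : ∀ a ∈ S, ∀ b ∈ S, a * b ∈ J) :
    span S ^ 2 ≤ J := by
  rw [sq, span_mul_span', span_le, Set.mul_subset_iff]
  exact h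

theorem span_pair_sq_le (x y : R) : span {x, y} ^ 2 ≤ span {x ^ 2, x * y, y ^ 2} := by
  refine span_sq_le_of_mul_mem ?_
  simp only [Set.mem_insert_iff, Set.mem_singleton_iff]
  rintro a (rfl | rfl) b (rfl | rfl) <;> exact subset_span (by simp [sq, mul_comm])

theorem span_sq_mul_sq_sq_le (x y : R) :
    span {x ^ 2, x * y, y ^ 2} ^ 2 ≤ span {x ^ 2, x * y, y ^ 3} := by
  have hx2 : x ^ 2 ∈ span {x ^ 2, x * y, y ^ 3} := subset_span (by simp)
  have hxy : x * y ∈ span {x ^ 2, x * y, y ^ 3} := subset_span (by simp)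
  have hy3 : y ^ 3 ∈ span {x ^ 2, x * y, y ^ 3} := subset_span (by simp)
  refine span_sq_le_of_mul_mem ?_
  simp only [Set.mem_insert_iff, Set.mem_singleton_iff]
  rintro a (rfl | rfl | rfl) b hb
  · exact mul_mem_right _ _ hx2
  · exact mul_mem_right _ _ hxy
  rcases hb with rfl | rfl | rfl
  · exact mul_mem_left _ _ hx2
  · exact mul_mem_left _ _ hxy
  · rw [show y ^ 2 * y ^ 2 = y * y ^ 3 by ring]
    exact mul_mem_left _ _ hy3

theorem notMem_span_of_map_eq_zero {S F : Type*} [Semiring S] [FunLike F R S]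
    [RingHomClass F R S] (f : F) {s : Set R}
    (hs : ∀ a ∈ s, f a = 0) {b : R} (hb : f b ≠ 0) : b ∉ span s :=
  fun h => hb ((span_le (I := RingHom.ker f)).2 hs h)

end Ideal

open Polynomial in
theorem Polynomial.mk_X_pow_ne_zero {R : Type*} [CommRing R] [Nontrivial R] {m n : ℕ}
    (h : m < n) : Ideal.Quotient.mk (Ideal.span {(X : R[X]) ^ n}) (X ^ m) ≠ 0 := by
  rw [Ne, Ideal.Quotient.eq_zero_iff_mem, Ideal.mem_span_singleton, X_pow_dvd_iff]
  intro hcoeff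
  simpa using hcoeff m h

open Polynomial in
def d7ToTruncCube (k : Type u) [Field k] : D7Ring k →ₐ[k] k[X] ⧸ Ideal.span {(X : k[X]) ^ 3} :=
  Ideal.Quotient.liftₐ _ (MvPolynomial.aeval ![0, Ideal.Quotient.mk _ X]) fun _ ha => by
    obtain ⟨c, rfl⟩ := Ideal.mem_span_singleton'.1 ha
    have ht : Ideal.Quotient.mk (Ideal.span {(X : k[X]) ^ 3}) X ^ 6 = 0 := by
      rw [← map_pow, show (X : k[X]) ^ 6 = X ^ 3 * X ^ 3 by ring, map_mul,
        Ideal.Quotient.mk_singleton_self, zero_mul]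
    simp [ht]

@[simp] theorem d7ToTruncCube_d7x (k : Type u) [Field k] : d7ToTruncCube k (d7x k) = 0 :=
  MvPolynomial.aeval_X _ _

@[simp] theorem d7ToTruncCube_d7y (k : Type u) [Field k] :
    d7ToTruncCube k (d7y k) = Ideal.Quotient.mk _ Polynomial.X :=
  MvPolynomial.aeval_X _ _

theorem d7y_sq_notMem_span (k : Type u) [Field k] :
    d7y k ^ 2 ∉ Ideal.span {d7x k ^ 2, d7x k * d7y k, d7y k ^ 3} := by
  refine Ideal.notMem_span_of_map_eq_zero (d7ToTruncCube k) ?_ ?_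
  · simp only [Set.mem_insert_iff, Set.mem_singleton_iff]
    rintro a (rfl | rfl | rfl)
    · simp
    · simp
    · rw [map_pow, d7ToTruncCube_d7y, ← map_pow]
      exact Ideal.Quotient.mk_singleton_self _
  · rw [map_pow, d7ToTruncCube_d7y, ← map_pow]
    exact Polynomial.mk_X_pow_ne_zero (by norm_num)

/-- Let `k` be a field, `R = k[x,y]/(x²y + y⁶)`, and consider the
ideals `L = (x, y)`, `M = (x², xy, y²)` and `N = (x², xy, y³)` of `R`.  Then `M² ⊆ N`
and `L² ⊆ M`, but `y² ∉ N`, and hence `L² ⊄ N`.  In particular the binary relation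
`I ≤ J ↔ I² ⊆ J` on ideals of `R` is not transitive. -/
theorem sq_subset_not_transitive (k : Type u) [Field k] :
    (Ideal.span {d7x k ^ 2, d7x k * d7y k, d7y k ^ 2}) ^ 2 ≤
        Ideal.span {d7x k ^ 2, d7x k * d7y k, d7y k ^ 3} ∧
    (Ideal.span {d7x k, d7y k}) ^ 2 ≤
        Ideal.span {d7x k ^ 2, d7x k * d7y k, d7y k ^ 2} ∧
    d7y k ^ 2 ∉ Ideal.span {d7x k ^ 2, d7x k * d7y k, d7y k ^ 3} ∧
    ¬ (Ideal.span {d7x k, d7y k}) ^ 2 ≤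
        Ideal.span {d7x k ^ 2, d7x k * d7y k, d7y k ^ 3} ∧
    ¬ Transitive (fun I J : Ideal (D7Ring k) => I ^ 2 ≤ J) := by
  have hMN := Ideal.span_sq_mul_sq_sq_le (d7x k) (d7y k)
  have hLM := Ideal.span_pair_sq_le (d7x k) (d7y k)
  have hy2 := d7y_sq_notMem_span k
  have hLN : ¬ Ideal.span {d7x k, d7y k} ^ 2 ≤
      Ideal.span {d7x k ^ 2, d7x k * d7y k, d7y k ^ 3} := fun h =>
    hy2 (h (Ideal.pow_mem_pow (Ideal.subset_span (by simp)) 2))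
  exact ⟨hMN, hLM, hy2, hLN, fun htr => hLN (htr hLM hMN)⟩

end
end

section
/- With the topology on α whose closed sets are generated by the sets C(m) for m ∈ α, the space α is compact if and only if there exists an element x ∈ α such that (A x)ⁿ ⊆ A m for every m ∈ α. -/
/-- Let `R` be a commutative ring, `α` a nonempty type, and
`A : α → Ideal R` a function such that for all `a, b` there is `c` with
`A c = A a ⊓ A b`.  Fix `n ≥ 1` and, for `m : α`, set
`C m = {l | (A l)ⁿ ⊆ A m}`.  Equip `α` with the topology whose open sets are
generated by the complements of the sets `C m` (so that `{C m | m : α}` is a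
subbasis of closed sets).  Then `α` is compact if and only if there exists `x : α`
with `(A x)ⁿ ⊆ A m` for every `m : α`. -/
theorem compactSpace_iff_exists_pow_le {R : Type*} [CommRing R] {α : Type*} [Nonempty α]
    (A : α → Ideal R) (hA : ∀ a b : α, ∃ c : α, A c = A a ⊓ A b)
    (n : ℕ) (hn : 1 ≤ n) :
    @CompactSpace α
        (TopologicalSpace.generateFrom
          {s : Set α | ∃ m : α, s = {l : α | (A l) ^ n ≤ A m}ᶜ}) ↔
      ∃ x : α, ∀ m : α, (A x) ^ n ≤ A m := by
  letI t : TopologicalSpace α := TopologicalSpace.generateFrom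
      {s : Set α | ∃ m : α, s = {l : α | (A l) ^ n ≤ A m}ᶜ}
  constructor
  · intro hc
    by_contra hx
    push_neg at hx
    have hcover : (Set.univ : Set α) ⊆ ⋃ m : α, {l : α | (A l) ^ n ≤ A m}ᶜ := by
      intro l _
      obtain ⟨m, hm⟩ := hx l
      exact Set.mem_iUnion.2 ⟨m, hm⟩
    have hopen : ∀ m : α, IsOpen ({l : α | (A l) ^ n ≤ A m}ᶜ) := fun m =>
      TopologicalSpace.isOpen_generateFrom_of_mem ⟨m, rfl⟩
    obtain ⟨s, hs⟩ := hc.isCompact_univ.elim_finite_subcover _ hopen hcover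
    have hmin : ∀ u : Finset α, ∃ c : α, ∀ m ∈ u, A c ≤ A m := by
      intro u
      classical
      induction u using Finset.induction_on with
      | empty => exact ⟨Classical.arbitrary α, fun m hm => absurd hm (Finset.notMem_empty m)⟩
      | @insert a u ha ih =>
        obtain ⟨c, hc⟩ := ih
        obtain ⟨c', hc'⟩ := hA a c
        refine ⟨c', fun m hm => ?_⟩
        rcases Finset.mem_insert.1 hm with rfl | hm
        · rw [hc']; exact inf_le_left
        · exact le_trans (hc' ▸ inf_le_right) (hc m hm)
    obtain ⟨c, hcle⟩ := hmin s
    have := hs (Set.mem_univ c)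
    simp only [Set.mem_iUnion, Set.mem_compl_iff, Set.mem_setOf_eq] at this
    obtain ⟨m, hm, hmem⟩ := this
    exact hmem (le_trans (Ideal.pow_le_self (by omega)) (hcle m hm))
  · rintro ⟨x, hx⟩
    have key : ∀ O : Set α, IsOpen O → x ∈ O → O = Set.univ := by
      intro O hO
      induction hO with
      | basic s hs =>
        obtain ⟨m, rfl⟩ := hs
        intro hxs
        exact absurd (hx m) hxs
      | univ => intro _; rfl
      | inter s u _ _ ihs ihu =>
        intro hxsu
        rw [ihs hxsu.1, ihu hxsu.2, Set.univ_inter]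
      | sUnion S _ ih =>
        intro hxS
        obtain ⟨u, huS, hxu⟩ := hxS
        exact Set.eq_univ_of_univ_subset ((ih u huS hxu) ▸ Set.subset_sUnion_of_mem huS)
    refine ⟨?_⟩
    rw [isCompact_iff_finite_subcover]
    intro ι U hU hcov
    obtain ⟨i, hi⟩ := Set.mem_iUnion.1 (hcov (Set.mem_univ x))
    exact ⟨{i}, by simp [key (U i) (hU i) hi]⟩
end
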